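/- arXiv:2401.12749 — 8 statements merged into one kernel-verified Lean document; each statement's English description precedes it below -/
import Mathlib

section
/- Let (O, ⊥) be an orthoset and X, Y ⊆ O. Then X is orthoclosed (X = X^⊥⊥) and Y = X^⊥ if and only if X ⊥ Y and for every z ∈ O \ (X ∪ Y) there exist x ∈ X and y ∈ Y with ¬(z ⊥ x) and ¬(z ⊥ y). -/
/-- The orthocomplement of a subset in an orthoset `(O, r)`. -/
def perp {O : Type*} (r : O → O → Prop) (X : Set O) : Set O :=
  {y | ∀ x ∈ X, r y x}

theorem orthoclosed_and_perp_iff {O : Type*} (r : O → O → Prop)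
    (hirr : Irreflexive r) (hsymm : Symmetric r) (X Y : Set O) :
    (X = perp r (perp r X) ∧ Y = perp r X) ↔
      ((∀ x ∈ X, ∀ y ∈ Y, r x y) ∧
        ∀ z : O, z ∉ X ∪ Y → ∃ x ∈ X, ∃ y ∈ Y, ¬ r z x ∧ ¬ r z y) := by
  constructor
  · rintro ⟨hX, hY⟩
    constructor
    · intro x hx y hy
      rw [hY] at hy
      exact hsymm (hy x hx)
    · intro z hz
      rw [Set.mem_union, not_or] at hz
      obtain ⟨hzX, hzY⟩ := hz
      rw [hX] at hzX
      rw [hY] at hzY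
      simp only [perp, Set.mem_setOf_eq, not_forall] at hzX hzY
      obtain ⟨x, hx, hrx⟩ := hzY
      obtain ⟨y, hy, hry⟩ := hzX
      exact ⟨x, hx, y, by rw [hY]; exact hy, hrx, hry⟩
  · rintro ⟨h1, h2⟩
    have hYX : Y = perp r X := by
      ext z
      constructor
      · intro hz x hx
        exact hsymm (h1 x hx z hz)
      · intro hz
        by_contra hzY
        rcases Classical.em (z ∈ X) with hzX | hzX
        · exact hirr z (hz z hzX)
        · obtain ⟨x, hx, _, _, hrx, _⟩ := h2 z (by simp [hzX, hzY])
          exact hrx (hz x hx)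
    refine ⟨?_, hYX⟩
    rw [← hYX]
    ext z
    constructor
    · intro hz y hy
      exact h1 z hz y hy
    · intro hz
      by_contra hzX
      rcases Classical.em (z ∈ Y) with hzY | hzY
      · exact hirr z (hz z hzY)
      · obtain ⟨_, _, y, hy, _, hry⟩ := h2 z (by simp [hzX, hzY])
        exact hry (hz y hy)
end

section
/- An orthoset (O, ⊥) is compatible (i.e., for all x, y ∈ O with ¬(x ⊥ y) there is z ∈ O with x^⊥ ∪ y^⊥ ⊆ z^⊥) if and only if for all x, y ∈ O, x^⊥⊥ ∩ y^⊥⊥ = ∅ implies x ⊥ y. -/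
theorem compatible_iff {O : Type*} (r : O → O → Prop)
    (hirr : Irreflexive r) (hsymm : Symmetric r) :
    (∀ x y : O, ¬ r x y → ∃ z : O, perp r {x} ∪ perp r {y} ⊆ perp r {z}) ↔
      (∀ x y : O, perp r (perp r {x}) ∩ perp r (perp r {y}) = ∅ → r x y) := by
  constructor
  · intro h x y hxy
    by_contra hnr
    obtain ⟨z, hz⟩ := h x y hnr
    have hzx : z ∈ perp r (perp r {x}) := by
      intro w hw
      exact hsymm (hz (Or.inl hw) z rfl)
    have hzy : z ∈ perp r (perp r {y}) := by
      intro w hw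
      exact hsymm (hz (Or.inr hw) z rfl)
    exact absurd hxy (by
      intro hempty
      exact (Set.eq_empty_iff_forall_notMem.mp hempty z) ⟨hzx, hzy⟩)
  · intro h x y hnr
    have : perp r (perp r {x}) ∩ perp r (perp r {y}) ≠ ∅ := fun he => hnr (h x y he)
    obtain ⟨z, hzx, hzy⟩ := Set.nonempty_iff_ne_empty.mpr this
    refine ⟨z, fun w hw u hu => ?_⟩
    cases hu
    rcases hw with hw | hw
    · exact hsymm (hzx w hw)
    · exact hsymm (hzy w hw)
end

section
/- An ortholattice L is a Boolean algebra if and only if for all a, b ∈ L, a ∧ b = 0 implies a ≤ b^⊥. -/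
theorem ortholattice_boolean_iff {L : Type*} [Lattice L] [BoundedOrder L]
    (oc : L → L)
    (hanti : Antitone oc)
    (hinv : ∀ x : L, oc (oc x) = x)
    (hdm_sup : ∀ x y : L, oc (x ⊔ y) = oc x ⊓ oc y)
    (hdm_inf : ∀ x y : L, oc (x ⊓ y) = oc x ⊔ oc y)
    (hinf : ∀ x : L, x ⊓ oc x = ⊥)
    (hsup : ∀ x : L, x ⊔ oc x = ⊤) :
    (∀ x y z : L, x ⊓ (y ⊔ z) = (x ⊓ y) ⊔ (x ⊓ z)) ↔
      (∀ a b : L, a ⊓ b = ⊥ → a ≤ oc b) := by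
  constructor
  · intro hd a b hab
    have : a = (a ⊓ b) ⊔ (a ⊓ oc b) := by
      rw [← hd, hsup, inf_top_eq]
    rw [hab, bot_sup_eq] at this
    rw [this] at *
    exact inf_le_right
  · intro h x y z
    refine le_antisymm ?_ (sup_le (inf_le_inf_left x le_sup_left)
      (inf_le_inf_left x le_sup_right))
    set w := (x ⊓ y) ⊔ (x ⊓ z) with hw
    set u := x ⊓ (y ⊔ z) ⊓ oc w with hu
    have hux : u ≤ x := le_trans inf_le_left inf_le_left
    have huw : u ≤ oc w := inf_le_right
    have key : ∀ t : L, x ⊓ t ≤ w → u ⊓ t = ⊥ := by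
      intro t ht
      apply le_antisymm _ bot_le
      calc u ⊓ t ≤ w ⊓ oc w := by
            apply le_inf
            · exact le_trans (inf_le_inf_right t hux) ht
            · exact le_trans inf_le_left huw
        _ = ⊥ := hinf w
    have huy : u ≤ oc y := h u y (key y le_sup_left)
    have huz : u ≤ oc z := h u z (key z le_sup_right)
    have hyz : u ≤ oc (y ⊔ z) := by rw [hdm_sup]; exact le_inf huy huz
    have hub : u = ⊥ := le_antisymm
      (le_trans (le_inf (le_trans inf_le_left inf_le_right) hyz)
        (le_of_eq (hinf (y ⊔ z)))) bot_le
    have := h (x ⊓ (y ⊔ z)) (oc w) (by rw [← hu, hub])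
    rwa [hinv] at this
end

section
/- Let P be a poset and let (P, ⊥) be its incomparability orthoset. Let X, Y ⊆ P. Then X is orthoclosed and Y = X^⊥ if and only if X ⊥ Y and for every z ∈ P \ (X ∪ Y) there exist x ∈ X, y ∈ Y such that either (z < x and z < y) or (z > x and z > y). -/
/-- Incomparability relation of a poset. -/
def incomp {P : Type*} [PartialOrder P] (x y : P) : Prop := ¬ x ≤ y ∧ ¬ y ≤ x

theorem orthoclosed_and_perp_iff_incomp {P : Type*} [PartialOrder P] (X Y : Set P) :
    (X = perp incomp (perp incomp X) ∧ Y = perp incomp X) ↔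
      ((∀ x ∈ X, ∀ y ∈ Y, incomp x y) ∧
        ∀ z : P, z ∉ X ∪ Y →
          ∃ x ∈ X, ∃ y ∈ Y, (z < x ∧ z < y) ∨ (x < z ∧ y < z)) := by
  constructor
  · rintro ⟨hX, hY⟩
    have hXY : ∀ x ∈ X, ∀ y ∈ Y, incomp x y := by
      intro x hx y hy
      rw [hY] at hy
      exact ⟨(hy x hx).2, (hy x hx).1⟩
    refine ⟨hXY, ?_⟩
    intro z hz
    simp only [Set.mem_union, not_or] at hz
    obtain ⟨hzX, hzY⟩ := hz
    -- z ∉ Y = X^⊥ : exists x ∈ X comparable to z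
    have h1 : ∃ x ∈ X, z ≤ x ∨ x ≤ z := by
      by_contra h
      push_neg at h
      exact hzY (hY ▸ (fun x hx => ⟨(h x hx).1, (h x hx).2⟩))
    -- z ∉ X = Y^⊥ : exists y ∈ Y comparable to z
    have h2 : ∃ y ∈ Y, z ≤ y ∨ y ≤ z := by
      by_contra h
      push_neg at h
      apply hzX
      rw [hX]
      intro w hw
      by_contra hc
      simp only [incomp, not_and, not_not] at hc
      have hwc : z ≤ w ∨ w ≤ z := by
        by_cases hzw : z ≤ w
        · exact Or.inl hzw
        · exact Or.inr (hc hzw)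
      have hwY : w ∈ Y := hY ▸ hw
      rcases hwc with h' | h'
      · exact (h w hwY).1 h'
      · exact (h w hwY).2 h'
    obtain ⟨x, hx, hxc⟩ := h1
    obtain ⟨y, hy, hyc⟩ := h2
    refine ⟨x, hx, y, hy, ?_⟩
    have hzx : z ≠ x := fun e => hzX (e ▸ hx)
    have hzy : z ≠ y := fun e => hzY (e ▸ hy)
    have hixy := hXY x hx y hy
    rcases hxc with h' | h' <;> rcases hyc with h'' | h''
    · exact Or.inl ⟨lt_of_le_of_ne h' hzx, lt_of_le_of_ne h'' hzy⟩
    · exact absurd (h''.trans h') hixy.2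
    · exact absurd (h'.trans h'') hixy.1
    · exact Or.inr ⟨lt_of_le_of_ne h' (Ne.symm hzx), lt_of_le_of_ne h'' (Ne.symm hzy)⟩
  · rintro ⟨hXY, hz⟩
    have hYperp : Y = perp incomp X := by
      ext w
      constructor
      · intro hw x hx
        exact ⟨(hXY x hx w hw).2, (hXY x hx w hw).1⟩
      · intro hw
        by_contra hwY
        have hwX : w ∉ X := by
          intro hwX
          exact (hw w hwX).1 le_rfl
        obtain ⟨x, hx, y, hy, hc⟩ := hz w (by simp [hwX, hwY])
        rcases hc with ⟨h1, _⟩ | ⟨h1, _⟩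
        · exact (hw x hx).1 h1.le
        · exact (hw x hx).2 h1.le
    refine ⟨?_, hYperp⟩
    ext w
    constructor
    · intro hw u hu
      exact ⟨(hu w hw).2, (hu w hw).1⟩
    · intro hw
      by_contra hwX
      have hwY : w ∉ Y := by
        intro hwY
        have : w ∈ perp incomp X := hYperp ▸ hwY
        exact (hw w this).1 le_rfl
      obtain ⟨x, hx, y, hy, hc⟩ := hz w (by simp [hwX, hwY])
      have hyp : y ∈ perp incomp X := hYperp ▸ hy
      rcases hc with ⟨_, h2⟩ | ⟨_, h2⟩
      · exact (hw y hyp).1 h2.le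
      · exact (hw y hyp).2 h2.le
end

section
/- Let P be a poset with incomparability orthoset (P, ⊥), and let X be an orthoclosed subset. Define D_X = {z ∈ P \ (X ∪ X^⊥) : ∃ x ∈ X, y ∈ X^⊥, z < x and z < y} and U_X = {z ∈ P \ (X ∪ X^⊥) : ∃ x ∈ X, y ∈ X^⊥, x < z and y < z}. Then P \ (X ∪ X^⊥) = U_X ∪ D_X and U_X ∩ D_X = ∅. -/
theorem complement_eq_up_union_down {P : Type*} [PartialOrder P] (X : Set P)
    (hX : X = perp incomp (perp incomp X)) :
    ((Set.univ : Set P) \ (X ∪ perp incomp X) =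
      {z : P | z ∉ X ∪ perp incomp X ∧ ∃ x ∈ X, ∃ y ∈ perp incomp X, x < z ∧ y < z} ∪
      {z : P | z ∉ X ∪ perp incomp X ∧ ∃ x ∈ X, ∃ y ∈ perp incomp X, z < x ∧ z < y}) ∧
    ({z : P | z ∉ X ∪ perp incomp X ∧ ∃ x ∈ X, ∃ y ∈ perp incomp X, x < z ∧ y < z} ∩
      {z : P | z ∉ X ∪ perp incomp X ∧ ∃ x ∈ X, ∃ y ∈ perp incomp X, z < x ∧ z < y} = ∅) := by
  -- key fact: if y ∈ X^⊥ and x ∈ X then ¬ y ≤ x and ¬ x ≤ y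
  have key : ∀ y ∈ perp incomp X, ∀ x ∈ X, ¬ y ≤ x ∧ ¬ x ≤ y := by
    intro y hy x hx
    have := hy x hx
    exact ⟨this.1, this.2⟩
  constructor
  · ext z
    simp only [Set.mem_diff, Set.mem_univ, true_and, Set.mem_union, Set.mem_setOf_eq]
    constructor
    · intro hz
      have hzX : z ∉ X := fun h => hz (Or.inl h)
      have hzXp : z ∉ perp incomp X := fun h => hz (Or.inr h)
      -- z ∉ X^⊥ gives x ∈ X comparable to z
      have hx : ∃ x ∈ X, ¬ incomp z x := by
        by_contra h
        push_neg at h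
        exact hzXp (fun x hxX => h x hxX)
      -- z ∉ X = X^⊥⊥ gives y ∈ X^⊥ comparable to z
      have hy : ∃ y ∈ perp incomp X, ¬ incomp z y := by
        by_contra h
        push_neg at h
        exact hzX (hX ▸ (fun y hyX => h y hyX))
      obtain ⟨x, hxX, hxc⟩ := hx
      obtain ⟨y, hyX, hyc⟩ := hy
      have hxc' : z ≤ x ∨ x ≤ z := by
        by_contra h; push_neg at h; exact hxc ⟨h.1, h.2⟩
      have hyc' : z ≤ y ∨ y ≤ z := by
        by_contra h; push_neg at h; exact hyc ⟨h.1, h.2⟩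
      have hne_x : z ≠ x := fun h => hzX (h ▸ hxX)
      have hne_y : z ≠ y := fun h => hzXp (h ▸ hyX)
      rcases hxc' with hzx | hxz
      · -- z < x; then z < y, else y ≤ z ≤ x contradicting y ⊥ x
        rcases hyc' with hzy | hyz
        · exact Or.inr ⟨hz, x, hxX, y, hyX, lt_of_le_of_ne hzx hne_x,
            lt_of_le_of_ne hzy hne_y⟩
        · exact absurd (hyz.trans hzx) (key y hyX x hxX).1
      · rcases hyc' with hzy | hyz
        · exact absurd (hxz.trans hzy) (key y hyX x hxX).2
        · exact Or.inl ⟨hz, x, hxX, y, hyX, lt_of_le_of_ne hxz (Ne.symm hne_x),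
            lt_of_le_of_ne hyz (Ne.symm hne_y)⟩
    · rintro (⟨h, _⟩ | ⟨h, _⟩) <;> exact h
  · ext z
    simp only [Set.mem_inter_iff, Set.mem_setOf_eq, Set.mem_empty_iff_false, iff_false]
    rintro ⟨⟨_, x, hxX, y, hyX, hxz, hyz⟩, ⟨_, x', hx'X, y', hy'X, hzx', hzy'⟩⟩
    exact (key y hyX x' hx'X).1 ((hyz.trans hzx').le)
end

section
/- Let P be a finite poset. If there exist a, b, c, d ∈ P with a < c, b ⋖ c (b covered by c), b < d, and all other distinct pairs among {a,b,c,d} incomparable (i.e., P contains an N), then the incomparability orthoset (P, ⊥) is not Dacey. -/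
/-- A basis of `X` is a maximal pairwise orthogonal subset of `X`. -/
def IsBasis {O : Type*} (r : O → O → Prop) (X B : Set O) : Prop :=
  B ⊆ X ∧ B.Pairwise r ∧ ∀ C : Set O, B ⊆ C → C ⊆ X → C.Pairwise r → C = B

/-- The orthoset is Dacey: every orthoclosed set equals the double
orthocomplement of each of its bases. -/
def IsDacey {O : Type*} (r : O → O → Prop) : Prop :=
  ∀ X : Set O, X = perp r (perp r X) →
    ∀ B : Set O, IsBasis r X B → X = perp r (perp r B)

/-- `(a,b,c,d)` form an N. -/
def FormN {P : Type*} [PartialOrder P] (a b c d : P) : Prop :=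
  a < c ∧ b ⋖ c ∧ b < d ∧ incomp a b ∧ incomp a d ∧ incomp c d

section Orthoset

variable {O : Type*} {r : O → O → Prop}

lemma perp_anti {S T : Set O} (h : S ⊆ T) : perp r T ⊆ perp r S :=
  fun _ hy x hx => hy x (h hx)

lemma subset_perp_perp [Std.Symm r] (S : Set O) : S ⊆ perp r (perp r S) :=
  fun s hs _ hy => symm (hy s hs)

lemma perp_perp_perp [Std.Symm r] (S : Set O) :
    perp r (perp r (perp r S)) = perp r S :=
  (perp_anti (subset_perp_perp S)).antisymm (subset_perp_perp _)

lemma perp_perp_isOrthoclosed [Std.Symm r] (S : Set O) :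
    perp r (perp r S) = perp r (perp r (perp r (perp r S))) := by
  rw [perp_perp_perp]

lemma exists_isBasis_superset {Y A : Set O} (hAY : A ⊆ Y) (hA : A.Pairwise r) :
    ∃ B, A ⊆ B ∧ IsBasis r Y B := by
  obtain ⟨B, hAB, hBmax⟩ := zorn_subset_nonempty {C | C ⊆ Y ∧ C.Pairwise r}
    (fun c hcS hc _ => ⟨⋃₀ c, ⟨Set.sUnion_subset fun C hC => (hcS hC).1,
      hc.pairwise_sUnion.2 fun C hC => (hcS hC).2⟩, fun _ => Set.subset_sUnion_of_mem⟩)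
    A ⟨hAY, hA⟩
  exact ⟨B, hAB, hBmax.1.1, hBmax.1.2, fun C hBC hCY hC => (hBmax.2 ⟨hCY, hC⟩ hBC).antisymm hBC⟩

lemma IsBasis.of_subset {X Y B : Set O} (hB : IsBasis r Y B) (hYX : Y ⊆ X)
    (h : ∀ x ∈ X, x ∉ B → (∀ y ∈ B, r x y) → x ∈ Y) : IsBasis r X B := by
  refine ⟨hB.1.trans hYX, hB.2.1, fun C hBC hCX hC => hB.2.2 C hBC (fun x hxC => ?_) hC⟩
  by_cases hxB : x ∈ B
  · exact hB.1 hxB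
  · exact h x (hCX hxC) hxB fun y hy => hC hxC (hBC hy) fun hxy => hxB (hxy ▸ hy)

end Orthoset

instance {P : Type*} [PartialOrder P] : Std.Symm (incomp (P := P)) :=
  ⟨fun _ _ h => ⟨h.2, h.1⟩⟩

lemma FormN.incomp_of_mem_perp_perp {P : Type*} [PartialOrder P] {a b c d x : P}
    (h : FormN a b c d) (hx : x ∈ perp incomp (perp incomp {a, c})) (hxa : incomp x a) :
    incomp x b := by
  obtain ⟨hac, hbc, hbd, -, had, hcd⟩ := h
  have hdx : incomp x d := hx d (by simpa [perp] using ⟨symm had, symm hcd⟩)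
  by_contra hxb
  rcases not_and_or.mp hxb with hxb | hbx <;> rw [not_not] at *
  · exact hdx.1 (hxb.trans hbd.le)
  · by_cases hxc : incomp x c
    · exact (hx x (by simpa [perp] using ⟨hxa, hxc⟩)).1 le_rfl
    rcases not_and_or.mp hxc with hxc | hcx <;> rw [not_not] at *
    · rcases hbc.eq_or_eq hbx hxc with rfl | rfl
      · exact hdx.1 hbd.le
      · exact hxa.2 hac.le
    · exact hxa.2 (hac.le.trans hcx)

theorem not_dacey_of_N_general {P : Type*} [PartialOrder P]
    (a b c d : P) (h : FormN a b c d) :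
    ¬ IsDacey (incomp (P := P)) := by
  intro hDacey
  set X := perp incomp (perp incomp ({a, c} : Set P))
  have haX : a ∈ X := subset_perp_perp _ (by simp)
  have hcX : c ∈ X := subset_perp_perp _ (by simp)
  obtain ⟨B, haB, hB⟩ := exists_isBasis_superset (r := incomp) (Y := {x ∈ X | incomp x b})
    (Set.singleton_subset_iff.2 ⟨haX, h.2.2.2.1⟩) (Set.pairwise_singleton a _)
  have hBX : IsBasis incomp X B := hB.of_subset (Set.sep_subset _ _)
    fun x hx _ hxB => ⟨hx, h.incomp_of_mem_perp_perp hx (hxB a (haB rfl))⟩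
  have hbB : b ∈ perp incomp B := fun y hy => symm (hB.1 hy).2
  have hcB : c ∈ perp incomp (perp incomp B) :=
    hDacey X (perp_perp_isOrthoclosed _) B hBX ▸ hcX
  exact (hcB b hbB).2 h.2.1.le

theorem not_dacey_of_N {P : Type*} [PartialOrder P] [Fintype P]
    (a b c d : P) (h : FormN a b c d) :
    ¬ IsDacey (incomp (P := P)) :=
  not_dacey_of_N_general a b c d h
end

section
/- In a finite poset P, if N(a,b,c,d) holds (a < c, b ⋖ c, b < d, all other distinct pairs incomparable), then there exist a', d' ∈ P with a' ⋖ c, b ⋖ d', and N(a', b, c, d'). -/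
theorem covering_N_of_N {P : Type*} [PartialOrder P] [Fintype P]
    (a b c d : P) (h : FormN a b c d) :
    ∃ a' d' : P, a' ⋖ c ∧ b ⋖ d' ∧ FormN a' b c d' := by
  obtain ⟨hac, hbc, hbd, ⟨hab1, hab2⟩, ⟨had1, had2⟩, ⟨hcd1, hcd2⟩⟩ := h
  obtain ⟨a', haa', ha'c⟩ := hac.exists_le_covby
  obtain ⟨d', hbd', hd'd⟩ := hbd.exists_covby_le
  refine ⟨a', d', ha'c, hbd', ha'c.lt, hbc, hbd'.lt, ?_, ?_, ?_⟩
  · constructor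
    · exact fun hle => hab1 (haa'.trans hle)
    · intro hle
      rcases hle.lt_or_eq with hlt | rfl
      · exact hbc.2 hlt ha'c.lt
      · exact hab1 haa'
  · constructor
    · exact fun hle => had1 (haa'.trans (hle.trans hd'd))
    · exact fun hle => hbc.2 hbd'.lt (lt_of_le_of_lt hle ha'c.lt)
  · constructor
    · exact fun hle => hcd1 (hle.trans hd'd)
    · intro hle
      rcases hle.lt_or_eq with hlt | rfl
      · exact hbc.2 hbd'.lt hlt
      · exact hcd1 hd'd
end

section
/- Let P be a finite poset. If P contains a weak N, i.e., elements a, b, c, d with a < c, b ⋖ c, b < d, a incomparable to b, and c incomparable to d, then the incomparability orthoset (P, ⊥) is not compatible: there exist x, y ∈ P with ¬(x ⊥ y) such that no z ∈ P satisfies x^⊥ ∪ y^⊥ ⊆ z^⊥. -/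
theorem not_compatible_of_weakN {P : Type*} [PartialOrder P] [Fintype P]
    (a b c d : P) (hac : a < c) (hbc : b ⋖ c) (hbd : b < d)
    (hab : incomp a b) (hcd : incomp c d) :
    ∃ x y : P, ¬ incomp x y ∧
      ∀ z : P, ¬ (perp incomp {x} ∪ perp incomp {y} ⊆ perp incomp {z}) := by
  refine ⟨b, c, fun h => h.1 hbc.le, fun z hz => ?_⟩
  have memb : ∀ w : P, incomp w b → w ∈ perp incomp ({b} : Set P) := by
    intro w hw x hx; rw [Set.mem_singleton_iff] at hx; subst hx; exact hw
  have memc : ∀ w : P, incomp w c → w ∈ perp incomp ({c} : Set P) := by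
    intro w hw x hx; rw [Set.mem_singleton_iff] at hx; subst hx; exact hw
  have haz : incomp a z := hz (Or.inl (memb a hab)) z rfl
  have hdz : incomp d z := hz (Or.inr (memc d ⟨hcd.2, hcd.1⟩)) z rfl
  have hzb : ¬ incomp z b := by
    intro h
    exact (hz (Or.inl (memb z h)) z rfl).1 le_rfl
  have hzc : ¬ incomp z c := by
    intro h
    exact (hz (Or.inr (memc z h)) z rfl).1 le_rfl
  by_cases hzb' : z ≤ b
  · exact hdz.2 (hzb'.trans hbd.le)
  · have hbz : b ≤ z := by
      by_contra hbz; exact hzb ⟨hzb', hbz⟩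
    by_cases hzc' : z ≤ c
    · -- b ≤ z ≤ c, covering forces z = c
      rcases eq_or_lt_of_le hbz with h | h
      · exact hzb' h.symm.le
      · have : ¬ z < c := hbc.2 h
        have hzc2 : z = c := by
          by_contra hne; exact this (lt_of_le_of_ne hzc' hne)
        exact haz.1 (hzc2 ▸ hac.le)
    · have hcz : c ≤ z := by
        by_contra hcz; exact hzc ⟨hzc', hcz⟩
      exact haz.1 (hac.le.trans hcz)
end
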